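/- arXiv:2110.05996 — 2 statements merged into one kernel-verified Lean document; each statement's English description precedes it below -/
import Mathlib

section
/- Let P ⊂ ℝ^d be a full-dimensional polytope, p ∉ P, P̂ = conv(P ∪ {p}), and let ℱ⁻ be the set of facets F of P such that p lies strictly on the side of the affine span of F not containing P. Then ⋃_{F ∈ ℱ⁻} conv(F ∪ {p}) equals the closure of P̂ \ P. -/
open scoped RealInnerProductSpace

/-- A facet of a `d`-dimensional polytope: a `(d−1)`-dimensional face. -/
def IsFacetOf {d : ℕ} (P F : Set (EuclideanSpace ℝ (Fin d))) : Prop :=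
  IsExtreme ℝ P F ∧ Convex ℝ F ∧ F.Nonempty ∧
    Module.finrank ℝ (affineSpan ℝ F).direction = d - 1

open Set

namespace PyramidAux

variable {d : ℕ}

local notation "E" => EuclideanSpace ℝ (Fin d)

lemma inner_isLinear (u : E) : IsLinearMap ℝ (fun x : E => ⟪u, x⟫) :=
  ⟨fun x y => inner_add_right u x y, fun c x => real_inner_smul_right u x c⟩

lemma inner_lt_of_interior {P : Set E} {u : E} {β : ℝ} (hu : u ≠ 0)
    (hle : ∀ x ∈ P, ⟪u, x⟫ ≤ β) {x : E} (hx : x ∈ interior P) : ⟪u, x⟫ < β := by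
  obtain ⟨ε, hε, hball⟩ := Metric.isOpen_iff.1 isOpen_interior x hx
  have hnu : 0 < ‖u‖ := norm_pos_iff.2 hu
  set δ : ℝ := ε / (2 * ‖u‖) with hδdef
  have hδ : 0 < δ := by positivity
  have hmem : x + δ • u ∈ P := by
    refine interior_subset <| hball ?_
    rw [Metric.mem_ball, dist_eq_norm]
    have : x + δ • u - x = δ • u := by abel
    rw [this, norm_smul, Real.norm_eq_abs, abs_of_pos hδ]
    have h5 : δ * ‖u‖ = ε / 2 := by rw [hδdef]; field_simp
    rw [h5]; linarith
  have h2 := hle _ hmem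
  rw [inner_add_right, real_inner_smul_right, real_inner_self_eq_norm_sq] at h2
  nlinarith [mul_pos hδ (pow_pos hnu 2)]

/-- The hyperplane `{x | ⟪u,x⟫ = β}` as an affine subspace. -/
noncomputable def hyperAff (u : E) (β : ℝ) : AffineSubspace ℝ E where
  carrier := {x | ⟪u, x⟫ = β}
  smul_vsub_vadd_mem' := by
    intro c p1 p2 p3 h1 h2 h3
    simp only [mem_setOf_eq] at h1 h2 h3 ⊢
    have : c • (p1 -ᵥ p2) +ᵥ p3 = c • (p1 - p2) + p3 := rfl
    rw [this, inner_add_right, real_inner_smul_right, inner_sub_right, h1, h2, h3]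
    ring

lemma affineSpan_subset_hyper {G : Set E} {u : E} {β : ℝ} (hG : ∀ x ∈ G, ⟪u, x⟫ = β) :
    ∀ x ∈ affineSpan ℝ G, ⟪u, x⟫ = β := by
  intro x hx
  have hle : affineSpan ℝ G ≤ hyperAff u β := affineSpan_le.2 (fun y hy => hG y hy)
  exact hle hx

lemma finrank_face_le {G : Set E} {u : E} {β : ℝ} (hu : u ≠ 0)
    (hG : ∀ x ∈ G, ⟪u, x⟫ = β) :
    Module.finrank ℝ (affineSpan ℝ G).direction ≤ d - 1 := by
  have hle : (affineSpan ℝ G).direction ≤ (Submodule.span ℝ {u})ᗮ := by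
    rw [direction_affineSpan, vectorSpan_def]
    refine Submodule.span_le.2 ?_
    rintro v ⟨x, hx, y, hy, rfl⟩
    rw [SetLike.mem_coe, Submodule.mem_orthogonal]
    intro z hz
    obtain ⟨r, rfl⟩ := Submodule.mem_span_singleton.1 hz
    show ⟪r • u, x - y⟫ = 0
    rw [real_inner_smul_left, inner_sub_right, hG x hx, hG y hy]
    ring
  have h1 : Module.finrank ℝ (Submodule.span ℝ {u}) = 1 := finrank_span_singleton hu
  have h2 := Submodule.finrank_add_finrank_orthogonal (K := Submodule.span ℝ {u})
  have h3 : Module.finrank ℝ E = d := finrank_euclideanSpace_fin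
  have h4 := Submodule.finrank_mono hle
  omega


lemma step_aux (V : Finset E) {P : Set E} (hP : P = convexHull ℝ (V : Set E))
    {u : E} {β : ℝ} (hle : ∀ x ∈ P, ⟪u, x⟫ ≤ β)
    {x0 : E} (hx0 : x0 ∈ affineSpan ℝ {x | x ∈ P ∧ ⟪u, x⟫ = β})
    {wg : E} (hwg : wg ∈ ((affineSpan ℝ {x | x ∈ P ∧ ⟪u, x⟫ = β}).direction)ᗮ)
    {v0 : E} (hv0 : v0 ∈ V) (hpos : 0 < ⟪wg, v0 - x0⟫) :
    ∃ t : ℝ, 0 < t ∧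
      (∀ x ∈ P, ⟪u + t • wg, x⟫ ≤ β + t * ⟪wg, x0⟫) ∧
      (∃ vs ∈ V, 0 < ⟪wg, vs - x0⟫ ∧ ⟪u + t • wg, vs⟫ = β + t * ⟪wg, x0⟫) ∧
      ∀ x ∈ {x | x ∈ P ∧ ⟪u, x⟫ = β}, ⟪u + t • wg, x⟫ = β + t * ⟪wg, x0⟫ := by
  classical
  set G : Set E := {x | x ∈ P ∧ ⟪u, x⟫ = β} with hGdef
  have horth : ∀ x ∈ affineSpan ℝ G, ⟪wg, x⟫ = ⟪wg, x0⟫ := by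
    intro x hx
    have hmem : (x - x0 : E) ∈ (affineSpan ℝ G).direction :=
      AffineSubspace.vsub_mem_direction hx hx0
    have h0 := (Submodule.mem_orthogonal' _ _).1 hwg _ hmem
    rw [inner_sub_right, sub_eq_zero] at h0
    exact h0
  have hVP : (V : Set E) ⊆ P := hP ▸ subset_convexHull ℝ _
  have hfb : ∀ v ∈ V, 0 < ⟪wg, v - x0⟫ → ⟪u, v⟫ < β := by
    intro v hv hgv
    rcases lt_or_eq_of_le (hle v (hVP hv)) with h | h
    · exact h
    · exfalso
      have hvG : v ∈ G := ⟨hVP hv, h⟩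
      have h2 := horth v (subset_affineSpan ℝ G hvG)
      rw [inner_sub_right] at hgv; linarith
  set T := V.filter (fun v => 0 < ⟪wg, v - x0⟫) with hT
  have hTne : T.Nonempty := ⟨v0, Finset.mem_filter.2 ⟨hv0, hpos⟩⟩
  set t := T.inf' hTne (fun v => (β - ⟪u, v⟫) / ⟪wg, v - x0⟫) with ht
  have htpos : 0 < t := by
    rw [ht, Finset.lt_inf'_iff]
    intro v hv
    obtain ⟨hv1, hv2⟩ := Finset.mem_filter.1 hv
    exact div_pos (by linarith [hfb v hv1 hv2]) hv2
  refine ⟨t, htpos, ?_, ?_, ?_⟩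
  · intro x hx
    rw [hP] at hx
    have hconv : Convex ℝ {x : E | ⟪u + t • wg, x⟫ ≤ β + t * ⟪wg, x0⟫} :=
      convex_halfSpace_le (inner_isLinear _) _
    refine convexHull_min ?_ hconv hx
    intro v hv
    show ⟪u + t • wg, v⟫ ≤ β + t * ⟪wg, x0⟫
    rw [inner_add_left, real_inner_smul_left]
    rcases le_or_gt ⟪wg, v - x0⟫ 0 with h | h
    · have h1 : ⟪u, v⟫ ≤ β := hle v (hVP hv)
      have h2 : ⟪wg, v⟫ ≤ ⟪wg, x0⟫ := by rw [inner_sub_right] at h; linarith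
      nlinarith
    · have h3 : t ≤ (β - ⟪u, v⟫) / ⟪wg, v - x0⟫ :=
        Finset.inf'_le _ (Finset.mem_filter.2 ⟨hv, h⟩)
      have h4 := (le_div_iff₀ h).1 h3
      rw [inner_sub_right] at h4
      nlinarith
  · obtain ⟨vs, hvsT, hvs⟩ :=
      Finset.exists_mem_eq_inf' hTne (fun v => (β - ⟪u, v⟫) / ⟪wg, v - x0⟫)
    obtain ⟨hvsV, hvsg⟩ := Finset.mem_filter.1 hvsT
    refine ⟨vs, hvsV, hvsg, ?_⟩
    rw [inner_add_left, real_inner_smul_left]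
    have h5 : t = (β - ⟪u, vs⟫) / ⟪wg, vs - x0⟫ := by rw [ht, ← hvs]
    have h6 : t * ⟪wg, vs - x0⟫ = β - ⟪u, vs⟫ := by
      rw [h5, div_mul_cancel₀ _ (ne_of_gt hvsg)]
    rw [inner_sub_right] at h6
    nlinarith [h6]
  · rintro x ⟨hxP, hxβ⟩
    have h7 := horth x (subset_affineSpan ℝ G ⟨hxP, hxβ⟩)
    rw [inner_add_left, real_inner_smul_left, hxβ, h7]

lemma isFacet_of_dim {P : Set E} (hPconv : Convex ℝ P) {u : E} {β : ℝ}
    (hle : ∀ x ∈ P, ⟪u, x⟫ ≤ β) (hne : ({x | x ∈ P ∧ ⟪u, x⟫ = β} : Set E).Nonempty)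
    (hdim : Module.finrank ℝ (affineSpan ℝ {x | x ∈ P ∧ ⟪u, x⟫ = β}).direction = d - 1) :
    IsFacetOf P {x | x ∈ P ∧ ⟪u, x⟫ = β} := by
  have hexp : IsExposed ℝ P {x | x ∈ P ∧ ⟪u, x⟫ = β} := by
    intro _
    refine ⟨innerSL ℝ u, ?_⟩
    ext x
    simp only [mem_setOf_eq, innerSL_apply_apply]
    constructor
    · rintro ⟨hxP, hxβ⟩
      exact ⟨hxP, fun y hy => by simpa using (hle y hy).trans (le_of_eq hxβ.symm)⟩
    · rintro ⟨hxP, hx⟩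
      obtain ⟨y0, hy0P, hy0β⟩ := hne
      refine ⟨hxP, le_antisymm (hle x hxP) ?_⟩
      have := hx y0 hy0P
      simpa [hy0β] using this
  exact ⟨hexp.isExtreme, hPconv.inter (convex_hyperplane (inner_isLinear u) β), hne, hdim⟩


lemma exists_facet_superset (V : Finset E) {P : Set E}
    (hP : P = convexHull ℝ (V : Set E)) (hfull : (interior P).Nonempty) :
    ∀ k : ℕ, ∀ u : E, ∀ β : ℝ, u ≠ 0 → (∀ x ∈ P, ⟪u, x⟫ ≤ β) →
      ({x | x ∈ P ∧ ⟪u, x⟫ = β} : Set E).Nonempty →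
      d - 1 - Module.finrank ℝ (affineSpan ℝ {x | x ∈ P ∧ ⟪u, x⟫ = β}).direction ≤ k →
      ∃ Fc, IsFacetOf P Fc ∧ {x | x ∈ P ∧ ⟪u, x⟫ = β} ⊆ Fc := by
  have hPconv : Convex ℝ P := hP ▸ convex_convexHull ℝ _
  have hVP : (V : Set E) ⊆ P := hP ▸ subset_convexHull ℝ _
  intro k
  induction k with
  | zero =>
    intro u β hu hle hne hk
    have hdle := finrank_face_le (G := {x | x ∈ P ∧ ⟪u, x⟫ = β}) hu (fun x hx => hx.2)
    exact ⟨_, isFacet_of_dim hPconv hle hne (by omega), Subset.rfl⟩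
  | succ k ih =>
    intro u β hu hle hne hk
    have hdle := finrank_face_le (G := {x | x ∈ P ∧ ⟪u, x⟫ = β}) hu (fun x hx => hx.2)
    rcases eq_or_lt_of_le hdle with heq | hlt
    · exact ⟨_, isFacet_of_dim hPconv hle hne heq, Subset.rfl⟩
    set G : Set E := {x | x ∈ P ∧ ⟪u, x⟫ = β} with hGdef
    obtain ⟨y0, hy0⟩ := hne
    have hx0 : y0 ∈ affineSpan ℝ G := subset_affineSpan ℝ G hy0
    set W := (affineSpan ℝ G).direction with hW
    -- the general finishing move, used for both candidate rotations
    have finish : ∀ (wg : E) (t : ℝ), wg ∈ Wᗮ → 0 < t → u + t • wg ≠ 0 →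
        (∀ x ∈ P, ⟪u + t • wg, x⟫ ≤ β + t * ⟪wg, y0⟫) →
        (∃ vs ∈ V, 0 < ⟪wg, vs - y0⟫ ∧ ⟪u + t • wg, vs⟫ = β + t * ⟪wg, y0⟫) →
        (∀ x ∈ G, ⟪u + t • wg, x⟫ = β + t * ⟪wg, y0⟫) →
        ∃ Fc, IsFacetOf P Fc ∧ G ⊆ Fc := by
      intro wg t hwgW htpos hu' hle' hvs hGsub
      obtain ⟨vs, hvsV, hvsg, hvseq⟩ := hvs
      set u' : E := u + t • wg with hu'def
      set β' : ℝ := β + t * ⟪wg, y0⟫ with hβ'def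
      set G' : Set E := {x | x ∈ P ∧ ⟪u', x⟫ = β'} with hG'def
      have hGG' : G ⊆ G' := fun x hx => ⟨hx.1, hGsub x hx⟩
      have hvsG' : vs ∈ G' := ⟨hVP hvsV, hvseq⟩
      have hvs_not : vs ∉ affineSpan ℝ G := by
        intro hmem
        have : (vs - y0 : E) ∈ W := AffineSubspace.vsub_mem_direction hmem hx0
        have h0 := (Submodule.mem_orthogonal' _ _).1 hwgW _ this
        rw [h0] at hvsg; exact lt_irrefl _ hvsg
      have hspanle : affineSpan ℝ G ≤ affineSpan ℝ G' := affineSpan_mono ℝ hGG'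
      have hdirlt : W < (affineSpan ℝ G').direction := by
        refine lt_of_le_of_ne (AffineSubspace.direction_le hspanle) ?_
        intro hEq
        have hspEq : affineSpan ℝ G = affineSpan ℝ G' :=
          AffineSubspace.ext_of_direction_eq hEq
            ⟨y0, hx0, hspanle hx0⟩
        exact hvs_not (hspEq ▸ subset_affineSpan ℝ G' hvsG')
      have hrank := Submodule.finrank_lt_finrank_of_lt hdirlt
      obtain ⟨Fc, hFc, hsub⟩ := ih u' β' hu' hle' ⟨vs, hvsG'⟩ (by
        have hEqset : {x | x ∈ P ∧ ⟪u', x⟫ = β'} = G' := rfl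
        rw [hEqset]; omega)
      exact ⟨Fc, hFc, hGG'.trans hsub⟩
    -- find a vertex outside the affine span of G
    have hexv : ∃ v ∈ V, v ∉ affineSpan ℝ G := by
      by_contra h
      push_neg at h
      obtain ⟨z, hz⟩ := hfull
      have hPsub : P ⊆ (affineSpan ℝ G : Set E) := by
        rw [hP]
        exact convexHull_min h (affineSpan ℝ G).convex
      have hz2 : ⟪u, z⟫ = β :=
        affineSpan_subset_hyper (fun x hx => hx.2) _ (hPsub (interior_subset hz))
      exact absurd hz2 (ne_of_lt (inner_lt_of_interior hu hle hz))
    obtain ⟨v0, hv0V, hv0⟩ := hexv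
    -- first rotation direction: orthogonal component of v0 - y0
    obtain ⟨y, hyW, z, hzW, hdecomp⟩ := W.exists_add_mem_mem_orthogonal (v0 - y0)
    have hz0 : z ≠ 0 := by
      rintro rfl
      apply hv0
      rw [add_zero] at hdecomp
      have hmemW : (v0 - y0 : E) ∈ W := hdecomp ▸ hyW
      have := AffineSubspace.vadd_mem_of_mem_direction hmemW hx0
      simpa [vsub_eq_sub, vadd_eq_add, sub_add_cancel] using this
    have hzy : ⟪z, y⟫ = 0 := (Submodule.mem_orthogonal' _ _).1 hzW y hyW
    have hzpos : 0 < ⟪z, v0 - y0⟫ := by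
      rw [hdecomp, inner_add_right, hzy, zero_add, real_inner_self_eq_norm_sq]
      have : 0 < ‖z‖ := norm_pos_iff.2 hz0
      positivity
    -- second rotation direction: add something orthogonal to the bigger span
    set W' := (affineSpan ℝ (insert v0 G)).direction with hW'
    have hv0y0 : (v0 - y0 : E) ≠ 0 := by
      intro h
      apply hv0
      have : v0 = y0 := by
        have := sub_eq_zero.1 h; exact this
      rw [this]; exact hx0
    have hW'eq : W' = Submodule.span ℝ {(v0 - y0 : E)} ⊔ W := by
      rw [hW', ← affineSpan_insert_affineSpan,
        AffineSubspace.direction_affineSpan_insert hx0]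
      rfl
    have hW'rank : Module.finrank ℝ W' < d := by
      rw [hW'eq]
      have h1 := Submodule.finrank_add_le_finrank_add_finrank
        (Submodule.span ℝ {(v0 - y0 : E)}) W
      have h2 : Module.finrank ℝ (Submodule.span ℝ {(v0 - y0 : E)}) = 1 :=
        finrank_span_singleton hv0y0
      omega
    have hwh : ∃ wh ∈ W'ᗮ, wh ≠ 0 := by
      apply Submodule.exists_mem_ne_zero_of_ne_bot
      intro hbot
      have h3 := Submodule.finrank_add_finrank_orthogonal (K := W')
      rw [hbot, finrank_bot, add_zero, finrank_euclideanSpace_fin] at h3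
      omega
    obtain ⟨wh, hwhW', hwh0⟩ := hwh
    have hWleW' : W ≤ W' := by rw [hW'eq]; exact le_sup_right
    have hwh_orthW : wh ∈ Wᗮ := Submodule.orthogonal_le hWleW' hwhW'
    have hwhv0 : ⟪wh, v0 - y0⟫ = 0 := by
      have hmem : (v0 - y0 : E) ∈ W' := by
        rw [hW'eq]
        exact Submodule.mem_sup_left (Submodule.mem_span_singleton_self _)
      exact (Submodule.mem_orthogonal' _ _).1 hwhW' _ hmem
    have hpos2 : 0 < ⟪z + wh, v0 - y0⟫ := by
      rw [inner_add_left, hwhv0, add_zero]; exact hzpos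
    obtain ⟨t1, ht1pos, ht1le, hvs1, ht1G⟩ := step_aux V hP hle hx0 hzW hv0V hzpos
    obtain ⟨t2, ht2pos, ht2le, hvs2, ht2G⟩ :=
      step_aux V hP hle hx0 (Submodule.add_mem _ hzW hwh_orthW) hv0V hpos2
    by_cases h1 : u + t1 • z ≠ 0
    · exact finish z t1 hzW ht1pos h1 ht1le hvs1 ht1G
    by_cases h2 : u + t2 • (z + wh) ≠ 0
    · exact finish (z + wh) t2 (Submodule.add_mem _ hzW hwh_orthW) ht2pos h2 ht2le hvs2 ht2G
    exfalso
    push_neg at h1 h2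
    have he : t1 • z = t2 • (z + wh) := by
      have h3 : u + t1 • z = u + t2 • (z + wh) := h1.trans h2.symm
      exact add_left_cancel h3
    have hinner : t1 * ⟪z, v0 - y0⟫ = t2 * ⟪z, v0 - y0⟫ := by
      have h4 : ⟪t1 • z, v0 - y0⟫ = ⟪t2 • (z + wh), v0 - y0⟫ := by rw [he]
      rwa [real_inner_smul_left, real_inner_smul_left, inner_add_left, hwhv0,
        add_zero] at h4
    have ht12 : t1 = t2 := mul_right_cancel₀ (ne_of_gt hzpos) hinner
    rw [ht12, smul_add] at he
    have h5 : t2 • wh = 0 := by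
      have := he.symm
      rwa [add_eq_left] at this
    rcases smul_eq_zero.1 h5 with h | h
    · exact (ne_of_gt ht2pos) h
    · exact hwh0 h


lemma frontier_subset_facet (V : Finset E) {P : Set E}
    (hP : P = convexHull ℝ (V : Set E)) (hfull : (interior P).Nonempty)
    {y : E} (hy : y ∈ frontier P) :
    ∃ Fc, IsFacetOf P Fc ∧ y ∈ Fc := by
  have hPconv : Convex ℝ P := hP ▸ convex_convexHull ℝ _
  have hPc : IsClosed P := hP ▸ (V.finite_toSet.isCompact_convexHull ℝ).isClosed
  have hyP : y ∈ P := by rw [← hPc.closure_eq]; exact hy.1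
  have hyi : y ∉ interior P := hy.2
  obtain ⟨f, hf⟩ :=
    geometric_hahn_banach_open_point hPconv.interior isOpen_interior hyi
  set u : E := (InnerProductSpace.toDual ℝ (EuclideanSpace ℝ (Fin d))).symm f with hu
  have huapp : ∀ x : E, ⟪u, x⟫ = f x := fun x => InnerProductSpace.toDual_symm_apply
  obtain ⟨z0, hz0⟩ := hfull
  have hune : u ≠ 0 := by
    intro h0
    have := hf z0 hz0
    have hz00 : f z0 = 0 := by rw [← huapp, h0, inner_zero_left]
    have hy0 : f y = 0 := by rw [← huapp, h0, inner_zero_left]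
    rw [hz00, hy0] at this; exact lt_irrefl _ this
  -- all of P satisfies f x ≤ f y
  have hle : ∀ x ∈ P, ⟪u, x⟫ ≤ ⟪u, y⟫ := by
    intro x hxP
    rw [huapp, huapp]
    by_contra hcon
    push_neg at hcon
    have hz0y : f z0 < f y := hf z0 hz0
    have hden : 0 < f x - f z0 := by linarith
    set θ : ℝ := (f x - f y) / (2 * (f x - f z0)) with hθ
    have hθpos : 0 < θ := by
      apply div_pos (by linarith) (by linarith)
    have hθle : θ ≤ 1/2 := by
      rw [hθ, div_le_iff₀ (by linarith)]
      linarith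
    have hmem : (1 - θ) • x + θ • z0 ∈ interior P :=
      hPconv.combo_closure_interior_mem_interior (subset_closure hxP) hz0
        (by linarith) hθpos (by ring)
    have h6 := hf _ hmem
    rw [map_add, map_smul, map_smul, smul_eq_mul, smul_eq_mul] at h6
    have h7 : θ * (f x - f z0) = (f x - f y) / 2 := by
      rw [hθ]; field_simp
    nlinarith
  obtain ⟨Fc, hFc, hsub⟩ := exists_facet_superset V hP ⟨z0, hz0⟩ d u ⟪u, y⟫ hune hle
    ⟨y, hyP, rfl⟩ (by omega)
  exact ⟨Fc, hFc, hsub ⟨hyP, rfl⟩⟩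

lemma mem_face_of_mem_hyper {P Fs : Set E} (hext : IsExtreme ℝ P Fs)
    (hconv : Convex ℝ Fs) (hne : Fs.Nonempty)
    {u : E} {β : ℝ} (hspanF : (affineSpan ℝ Fs : Set E) = {x | ⟪u, x⟫ = β})
    {x : E} (hxP : x ∈ P) (hxβ : ⟪u, x⟫ = β) : x ∈ Fs := by
  obtain ⟨z', hz'⟩ := hne.intrinsicInterior hconv
  obtain ⟨zt, hztint, hztcoe⟩ := hz'
  set z : E := (zt : E) with hzdef
  have hzF : z ∈ Fs := by
    rw [hztcoe]
    exact intrinsicInterior_subset ⟨zt, hztint, hztcoe⟩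
  have hxspan : x ∈ affineSpan ℝ Fs := by
    rw [← SetLike.mem_coe, hspanF]; exact hxβ
  have hzspan : z ∈ affineSpan ℝ Fs := subset_affineSpan ℝ _ hzF
  have hmemspan : ∀ s : ℝ, z + s • (z - x) ∈ affineSpan ℝ Fs := by
    intro s
    have h := AffineSubspace.smul_vsub_vadd_mem (affineSpan ℝ Fs) s hzspan hxspan hzspan
    have hEq : s • (z -ᵥ x) +ᵥ z = z + s • (z - x) := by
      simp [vsub_eq_sub, vadd_eq_add]; abel
    rwa [hEq] at h
  set γ : ℝ → affineSpan ℝ Fs := fun s => ⟨z + s • (z - x), hmemspan s⟩ with hγ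
  have hγcont : Continuous γ := by
    apply Continuous.subtype_mk
    continuity
  have hγ0 : γ 0 = zt := by
    apply Subtype.ext
    simp [hγ, hzdef]
  have hopen : IsOpen (γ ⁻¹' (interior ((↑) ⁻¹' Fs : Set (affineSpan ℝ Fs)))) :=
    hγcont.isOpen_preimage _ isOpen_interior
  have h0mem : (0:ℝ) ∈ γ ⁻¹' (interior ((↑) ⁻¹' Fs : Set (affineSpan ℝ Fs))) := by
    rw [mem_preimage, hγ0]; exact hztint
  obtain ⟨ε, hεpos, hball⟩ := Metric.isOpen_iff.1 hopen 0 h0mem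
  have hsmem : (ε/2 : ℝ) ∈ γ ⁻¹' (interior ((↑) ⁻¹' Fs : Set (affineSpan ℝ Fs))) := by
    apply hball
    rw [Metric.mem_ball, Real.dist_eq, sub_zero, abs_of_pos (by linarith)]
    linarith
  have hz'F : z + (ε/2) • (z - x) ∈ Fs := by
    have := interior_subset hsmem
    rwa [mem_preimage] at this
  set e : ℝ := ε/2 with he
  have hepos : 0 < e := by rw [he]; linarith
  have hz_open : z ∈ openSegment ℝ x (z + e • (z - x)) := by
    refine ⟨e/(1+e), 1/(1+e), by positivity, by positivity, ?_, ?_⟩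
    · field_simp; ring
    · have h1e : (0:ℝ) < 1 + e := by linarith
      match_scalars
      · field_simp; try ring
      · field_simp; try ring
  exact hext.2 hxP (hext.1 hz'F) hzF hz_open

lemma w_ne_zero (hd : 1 ≤ d) {Fs : Set E} (hne : Fs.Nonempty)
    (hdim : Module.finrank ℝ (affineSpan ℝ Fs).direction = d - 1) {u : E} {β : ℝ}
    (hspanF : (affineSpan ℝ Fs : Set E) = {x | ⟪u, x⟫ = β}) : u ≠ 0 := by
  rintro rfl
  obtain ⟨x, hx⟩ := hne
  have hxs : x ∈ ({x : E | ⟪(0:E), x⟫ = β}) := by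
    rw [← hspanF]; exact subset_affineSpan ℝ _ hx
  rw [mem_setOf_eq, inner_zero_left] at hxs
  have huniv : (affineSpan ℝ Fs : Set E) = univ := by
    rw [hspanF]; ext y; simp [inner_zero_left, ← hxs]
  have htop : affineSpan ℝ Fs = ⊤ := by
    apply SetLike.coe_injective
    rw [huniv]; rfl
  rw [htop, AffineSubspace.direction_top, finrank_top, finrank_euclideanSpace_fin] at hdim
  omega


lemma exists_violated (hd : 1 ≤ d) (V : Finset E) {P : Set E}
    (hP : P = convexHull ℝ (V : Set E)) (hfull : (interior P).Nonempty)
    {n : ℕ} {F : Fin n → Set E}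
    (hF : ∀ i, IsFacetOf P (F i)) (hFall : ∀ G, IsFacetOf P G → ∃ i, G = F i)
    {w : Fin n → E} {c : Fin n → ℝ}
    (hspan : ∀ i, (affineSpan ℝ (F i) : Set E) = {x | ⟪w i, x⟫ = c i})
    (hside : ∀ i, P ⊆ {x | ⟪w i, x⟫ ≤ c i})
    {z : E} (hz : z ∉ P) : ∃ i, c i < ⟪w i, z⟫ := by
  by_contra hcon
  push_neg at hcon
  have hPc : IsClosed P := hP ▸ (V.finite_toSet.isCompact_convexHull ℝ).isClosed
  obtain ⟨z0, hz0⟩ := id hfull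
  have hz0P : z0 ∈ P := interior_subset hz0
  set g : ℝ → E := fun s => z0 + s • (z - z0) with hg
  set A : Set ℝ := {s | s ∈ Icc (0:ℝ) 1 ∧ g s ∈ P} with hA
  have hA0 : (0:ℝ) ∈ A := ⟨⟨le_refl 0, zero_le_one⟩, by simp [hg, hz0P]⟩
  have hAbdd : BddAbove A := ⟨1, fun s hs => hs.1.2⟩
  have hAclosed : IsClosed A := by
    apply IsClosed.inter isClosed_Icc
    exact hPc.preimage (by continuity)
  set s0 : ℝ := sSup A with hs0
  have hs0A : s0 ∈ A := hAclosed.csSup_mem ⟨0, hA0⟩ hAbdd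
  have hs0le : s0 ≤ 1 := hs0A.1.2
  have hs0ge : 0 ≤ s0 := hs0A.1.1
  have h1A : (1:ℝ) ∉ A := by
    intro h
    apply hz
    have h2 := h.2
    simpa [hg] using h2
  have hs0lt : s0 < 1 := lt_of_le_of_ne hs0le (fun h => h1A (h ▸ hs0A))
  set y : E := g s0 with hy
  have hyP : y ∈ P := hs0A.2
  have hzz0 : z - z0 ≠ 0 := sub_ne_zero.2 (by intro h; exact hz (by rw [h]; exact hz0P))
  have hynotint : y ∉ interior P := by
    intro hyint
    obtain ⟨ε, hεpos, hball⟩ := Metric.isOpen_iff.1 isOpen_interior y hyint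
    have hnorm : 0 < ‖z - z0‖ := norm_pos_iff.2 hzz0
    set δ : ℝ := ε / (‖z - z0‖ + 1) with hδ
    have hδpos : 0 < δ := by positivity
    set s1 : ℝ := min 1 (s0 + δ) with hs1
    have hs1gt : s0 < s1 := lt_min hs0lt (by linarith)
    have hmem : g s1 ∈ P := by
      apply interior_subset
      apply hball
      rw [Metric.mem_ball, dist_eq_norm]
      have hdiff : g s1 - y = (s1 - s0) • (z - z0) := by
        rw [hy]; show z0 + s1 • (z - z0) - (z0 + s0 • (z - z0)) = (s1 - s0) • (z - z0)
        module
      rw [hdiff, norm_smul, Real.norm_eq_abs, abs_of_pos (by linarith)]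
      have hs1le' : s1 - s0 ≤ δ := by
        have := min_le_right (1:ℝ) (s0 + δ)
        rw [← hs1] at this
        linarith
      calc (s1 - s0) * ‖z - z0‖ ≤ δ * ‖z - z0‖ := by nlinarith
        _ < ε := by
            rw [hδ, div_mul_eq_mul_div, div_lt_iff₀ (by positivity)]
            nlinarith
    have hs1A : s1 ∈ A := ⟨⟨le_min zero_le_one (by linarith), min_le_left _ _⟩, hmem⟩
    have hle' := le_csSup hAbdd hs1A
    rw [← hs0] at hle'
    linarith
  have hyfr : y ∈ frontier P := ⟨subset_closure hyP, hynotint⟩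
  obtain ⟨Fc, hFc, hyFc⟩ := frontier_subset_facet V hP hfull hyfr
  obtain ⟨i, rfl⟩ := hFall Fc hFc
  have hyi : ⟪w i, y⟫ = c i := by
    have hm : y ∈ (affineSpan ℝ (F i) : Set E) := subset_affineSpan ℝ (F i) hyFc
    rw [hspan i] at hm; exact hm
  have hz0i : ⟪w i, z0⟫ < c i :=
    inner_lt_of_interior (w_ne_zero hd (hF i).2.2.1 (hF i).2.2.2 (hspan i))
      (fun x hx => hside i hx) hz0
  have hzi : ⟪w i, z⟫ ≤ c i := hcon i
  rw [hy] at hyi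
  show False
  have hyi' : ⟪w i, z0⟫ + s0 * (⟪w i, z⟫ - ⟪w i, z0⟫) = c i := by
    rw [← hyi]
    show _ = ⟪w i, z0 + s0 • (z - z0)⟫
    rw [inner_add_right, real_inner_smul_right, inner_sub_right]
  nlinarith

end PyramidAux

set_option maxHeartbeats 2000000 in
/-- The union of the pyramids `conv(F ∪ {p})` over the facets `F` of `P` such that `p` lies
strictly on the side of the affine span of `F` not containing `P` equals the closure of `conv(P ∪ {p}) \\ P`. -/
theorem pyramid_union_minus {d : ℕ} (V : Finset (EuclideanSpace ℝ (Fin d)))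
    (P : Set (EuclideanSpace ℝ (Fin d)))
    (hP : P = convexHull ℝ (V : Set (EuclideanSpace ℝ (Fin d))))
    (hfull : (interior P).Nonempty)
    (p : EuclideanSpace ℝ (Fin d)) (hp : p ∉ P)
    (n : ℕ) (F : Fin n → Set (EuclideanSpace ℝ (Fin d))) (hFinj : Function.Injective F)
    (hF : ∀ i, IsFacetOf P (F i)) (hFall : ∀ G, IsFacetOf P G → ∃ i, G = F i)
    (w : Fin n → EuclideanSpace ℝ (Fin d)) (c : Fin n → ℝ)
    (hspan : ∀ i, (affineSpan ℝ (F i) : Set (EuclideanSpace ℝ (Fin d)))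
      = {x | ⟪w i, x⟫ = c i})
    (hside : ∀ i, P ⊆ {x | ⟪w i, x⟫ ≤ c i}) :
    (⋃ i ∈ {i : Fin n | c i < ⟪w i, p⟫}, convexHull ℝ (F i ∪ {p})) =
      closure (convexHull ℝ (P ∪ {p}) \ P) := by

  classical
  rcases Nat.eq_zero_or_pos d with hd0 | hd
  · exfalso
    subst hd0
    obtain ⟨x0, hx0⟩ := hfull
    haveI : Subsingleton (EuclideanSpace ℝ (Fin 0)) :=
      ⟨fun a b => by ext i; exact i.elim0⟩
    exact hp (by rw [show p = x0 from Subsingleton.elim p x0]; exact interior_subset hx0)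
  have hPconv : Convex ℝ P := hP ▸ convex_convexHull ℝ _
  have hPcomp : IsCompact P := hP ▸ V.finite_toSet.isCompact_convexHull ℝ
  have hPc : IsClosed P := hPcomp.isClosed
  have hne : ∀ i, (F i).Nonempty := fun i => (hF i).2.2.1
  have hFP : ∀ i, F i ⊆ P := fun i => (hF i).1.1
  have hFhyp : ∀ i, ∀ x ∈ F i, ⟪w i, x⟫ = c i := by
    intro i x hx
    have hm : x ∈ (affineSpan ℝ (F i) : Set (EuclideanSpace ℝ (Fin d))) :=
      subset_affineSpan ℝ _ hx
    rw [hspan i] at hm; exact hm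
  have hFeq : ∀ i, F i = P ∩ {x | ⟪w i, x⟫ = c i} := by
    intro i
    apply Set.Subset.antisymm
    · exact fun x hx => ⟨hFP i hx, hFhyp i x hx⟩
    · rintro x ⟨hxP, hxβ⟩
      exact PyramidAux.mem_face_of_mem_hyper (hF i).1 (hF i).2.1 (hne i) (hspan i) hxP hxβ
  have hFcomp : ∀ i, IsCompact (F i) := by
    intro i
    rw [hFeq i]
    exact hPcomp.of_isClosed_subset
      (hPc.inter (isClosed_eq (continuous_const.inner continuous_id) continuous_const))
      Set.inter_subset_left
  have hpyr_eq : ∀ i, convexHull ℝ (F i ∪ {p}) =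
      (fun q : ℝ × (EuclideanSpace ℝ (Fin d)) => (1 - q.1) • p + q.1 • q.2) ''
        (Set.Icc (0:ℝ) 1 ×ˢ F i) := by
    intro i
    rw [Set.union_singleton, convexHull_insert (hne i), (hF i).2.1.convexHull_eq]
    ext x
    constructor
    · intro hx
      rw [mem_convexJoin] at hx
      obtain ⟨a, ha, b, hb, hx⟩ := hx
      rw [Set.mem_singleton_iff] at ha
      subst ha
      rw [segment_eq_image] at hx
      obtain ⟨θ, hθ, rfl⟩ := hx
      exact ⟨(θ, b), ⟨hθ, hb⟩, rfl⟩
    · rintro ⟨⟨θ, b⟩, ⟨hθ, hb⟩, rfl⟩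
      rw [mem_convexJoin]
      exact ⟨p, rfl, b, hb, by rw [segment_eq_image]; exact ⟨θ, hθ, rfl⟩⟩
  have hpyr_closed : ∀ i, IsClosed (convexHull ℝ (F i ∪ {p})) := by
    intro i
    rw [hpyr_eq i]
    refine ((isCompact_Icc.prod (hFcomp i)).image ?_).isClosed
    exact ((continuous_const.sub continuous_fst).smul continuous_const).add
      (continuous_fst.smul continuous_snd)
  have hdiffmem : ∀ i, c i < ⟪w i, p⟫ → ∀ y ∈ F i, ∀ t : ℝ, 0 < t → t ≤ 1 →
      (1 - t) • y + t • p ∈ convexHull ℝ (P ∪ {p}) \ P := by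
    intro i hi y hy t ht0 ht1
    constructor
    · apply (convex_convexHull ℝ (P ∪ {p})).segment_subset
        (subset_convexHull ℝ _ (Set.mem_union_left _ (hFP i hy)))
        (subset_convexHull ℝ _ (Set.mem_union_right _ rfl))
      exact ⟨1 - t, t, by linarith, le_of_lt ht0, by ring, rfl⟩
    · intro hmem
      have hle := hside i hmem
      rw [Set.mem_setOf_eq, inner_add_right, real_inner_smul_right, real_inner_smul_right,
        hFhyp i y hy] at hle
      nlinarith
  apply Set.Subset.antisymm
  · intro x hx
    simp only [Set.mem_iUnion, Set.mem_setOf_eq] at hx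
    obtain ⟨i, hi, hx⟩ := hx
    rw [hpyr_eq i] at hx
    obtain ⟨⟨θ, b⟩, ⟨hθ, hb⟩, rfl⟩ := hx
    rw [Set.mem_Icc] at hθ
    show (1 - θ) • p + θ • b ∈ closure (convexHull ℝ (P ∪ {p}) \ P)
    have hθ' : 0 ≤ θ ∧ θ ≤ 1 := hθ
    rcases lt_or_eq_of_le hθ'.2 with hθ1 | hθ1
    · apply subset_closure
      have hmem := hdiffmem i hi b hb (1 - θ) (by linarith) (by linarith [hθ'.1])
      have h2 : (1:ℝ) - (1 - θ) = θ := by ring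
      rw [h2, add_comm] at hmem
      exact hmem
    · -- θ = 1 : limit argument
      have hθ1' : θ = 1 := hθ1
      have hxb : (1 - θ) • p + θ • b = b := by rw [hθ1']; simp
      rw [hxb]
      have hbmem : ∀ k : ℕ, (1 - (1/(k+1) : ℝ)) • b + (1/(k+1) : ℝ) • p ∈
          convexHull ℝ (P ∪ {p}) \ P := by
        intro k
        apply hdiffmem i hi b hb
        · positivity
        · rw [div_le_one (by positivity)]
          linarith [Nat.cast_nonneg (α := ℝ) k]
      have htend : Filter.Tendsto
          (fun k : ℕ => (1 - (1/(k+1) : ℝ)) • b + (1/(k+1) : ℝ) • p)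
          Filter.atTop (nhds b) := by
        have h1 : (fun k : ℕ => (1 - (1/(k+1) : ℝ)) • b + (1/(k+1) : ℝ) • p)
            = fun k : ℕ => b + (1/((k:ℝ)+1)) • (p - b) := by
          funext k; module
        rw [h1]
        have h2 := (tendsto_one_div_add_atTop_nhds_zero_nat :
          Filter.Tendsto (fun n : ℕ => 1 / ((n : ℝ) + 1)) Filter.atTop (nhds 0)).smul_const (p - b)
        have h3 := Filter.Tendsto.add
          (tendsto_const_nhds (x := b) (f := Filter.atTop (α := ℕ))) h2
        simpa using h3
      exact mem_closure_of_tendsto htend (Filter.Eventually.of_forall hbmem)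
  · apply closure_minimal ?_ (Set.Finite.isClosed_biUnion (Set.toFinite _)
      (fun i _ => hpyr_closed i))
    rintro q ⟨hqhull, hqP⟩
    obtain ⟨z0, hz0⟩ := id hfull
    have hPne : P.Nonempty := ⟨z0, interior_subset hz0⟩
    rw [Set.union_singleton, convexHull_insert hPne, hPconv.convexHull_eq,
      mem_convexJoin] at hqhull
    obtain ⟨a', ha', x, hxP, hq⟩ := hqhull
    rw [Set.mem_singleton_iff] at ha'
    rw [ha'] at hq
    rw [segment_eq_image] at hq
    obtain ⟨θ, hθ, rfl⟩ := hq
    rw [Set.mem_Icc] at hθ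
    have hqP' : (1 - θ) • p + θ • x ∉ P := hqP
    set a : ℝ := 1 - θ with hadef
    have ha0 : 0 ≤ a := by rw [hadef]; linarith [hθ.2]
    have ha1 : a ≤ 1 := by rw [hadef]; linarith [hθ.1]
    have hapos : 0 < a := by
      rcases eq_or_lt_of_le ha0 with h | h
      · exfalso
        have hθ1 : θ = 1 := by rw [hadef] at h; linarith
        have hxb : (1 - θ) • p + θ • x = x := by rw [hθ1]; simp
        exact hqP' (by rw [hxb]; exact hxP)
      · exact h
    set r : ℝ → EuclideanSpace ℝ (Fin d) := fun s => x + s • (p - x) with hrdef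
    have hra : r a = (1 - θ) • p + θ • x := by
      rw [hrdef, hadef]
      show x + (1 - θ) • (p - x) = (1 - θ) • p + θ • x
      module
    set A : Set ℝ := {s | s ∈ Set.Icc (0:ℝ) a ∧ r s ∈ P} with hAdef
    have hA0 : (0:ℝ) ∈ A := ⟨⟨le_refl 0, ha0⟩, by
      show x + (0:ℝ) • (p - x) ∈ P
      simpa using hxP⟩
    have hAbdd : BddAbove A := ⟨a, fun s hs => hs.1.2⟩
    have hAclosed : IsClosed A := by
      apply IsClosed.inter isClosed_Icc
      refine hPc.preimage ?_
      exact continuous_const.add (continuous_id.smul continuous_const)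
    set s0 : ℝ := sSup A with hs0def
    have hs0A : s0 ∈ A := hAclosed.csSup_mem ⟨0, hA0⟩ hAbdd
    have hs0ge : 0 ≤ s0 := hs0A.1.1
    have hs0lea : s0 ≤ a := hs0A.1.2
    have haA : a ∉ A := fun h => hqP' (by rw [← hra]; exact h.2)
    have hs0lta : s0 < a := lt_of_le_of_ne hs0lea (fun h => haA (h ▸ hs0A))
    have hout : ∀ s, s0 < s → s ≤ a → ∃ i, c i < ⟪w i, r s⟫ := by
      intro s hs1 hs2
      apply PyramidAux.exists_violated hd V hP hfull hF hFall hspan hside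
      intro hmem
      have hsA : s ∈ A := ⟨⟨by linarith, hs2⟩, hmem⟩
      have := le_csSup hAbdd hsA
      rw [← hs0def] at this; linarith
    have key : ∃ i, ∀ ε : ℝ, 0 < ε →
        ∃ s, s0 < s ∧ s ≤ a ∧ s < s0 + ε ∧ c i < ⟪w i, r s⟫ := by
      by_contra hcon
      push_neg at hcon
      choose ε hεpos hεprop using hcon
      by_cases hn : n = 0
      · obtain ⟨i, _⟩ := hout a hs0lta le_rfl
        exact Fin.elim0 (hn ▸ i)
      · have hnne : (Finset.univ : Finset (Fin n)).Nonempty := by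
          have : Nonempty (Fin n) := ⟨⟨0, Nat.pos_of_ne_zero hn⟩⟩
          exact Finset.univ_nonempty
        set δ := Finset.univ.inf' hnne ε with hδdef
        have hδpos : 0 < δ := by
          rw [hδdef, Finset.lt_inf'_iff]; exact fun i _ => hεpos i
        set s : ℝ := min a (s0 + δ/2) with hsdef
        have hsgt : s0 < s := lt_min hs0lta (by linarith)
        have hsle : s ≤ a := min_le_left _ _
        obtain ⟨i, hi⟩ := hout s hsgt hsle
        have hslt : s < s0 + ε i := by
          have h1 : s ≤ s0 + δ/2 := min_le_right _ _
          have h2 : δ ≤ ε i := Finset.inf'_le _ (Finset.mem_univ i)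
          linarith
        exact absurd hi (not_lt.2 (hεprop i s hsgt hsle hslt))
    obtain ⟨i, hQ⟩ := key
    have hyi : ⟪w i, r s0⟫ = c i := by
      have hle1 : ⟪w i, r s0⟫ ≤ c i := hside i hs0A.2
      rcases lt_or_eq_of_le hle1 with hlt | heq
      swap
      · exact heq
      exfalso
      set m : ℝ := ⟪w i, p - x⟫ with hmdef
      have hrs : ∀ s : ℝ, ⟪w i, r s⟫ = ⟪w i, r s0⟫ + (s - s0) * m := by
        intro s
        rw [hmdef]
        show ⟪w i, x + s • (p - x)⟫ = ⟪w i, x + s0 • (p - x)⟫ + (s - s0) * ⟪w i, p - x⟫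
        rw [inner_add_right, inner_add_right, real_inner_smul_right, real_inner_smul_right]
        ring
      obtain ⟨s, hs1, hs2, hs3, hs4⟩ := hQ ((c i - ⟪w i, r s0⟫)/(|m| + 1))
        (div_pos (by linarith) (by positivity))
      rw [hrs s] at hs4
      have hmabs : m ≤ |m| + 1 := by linarith [le_abs_self m]
      have habs : (s - s0) * m ≤ (s - s0) * (|m| + 1) :=
        mul_le_mul_of_nonneg_left hmabs (by linarith)
      have habspos : (0:ℝ) < |m| + 1 := by positivity
      have hfinal : (s - s0) * (|m| + 1) <
          ((c i - ⟪w i, r s0⟫)/(|m| + 1)) * (|m| + 1) :=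
        mul_lt_mul_of_pos_right (by linarith) habspos
      rw [div_mul_cancel₀ _ (ne_of_gt habspos)] at hfinal
      linarith
    obtain ⟨s', hs'1, hs'2, _, hs'4⟩ := hQ 1 one_pos
    have hvis : c i < ⟪w i, p⟫ := by
      have hxle : ⟪w i, x⟫ ≤ c i := hside i hxP
      have hcomp : ⟪w i, r s'⟫ = (1 - s') * ⟪w i, x⟫ + s' * ⟪w i, p⟫ := by
        show ⟪w i, x + s' • (p - x)⟫ = _
        rw [inner_add_right, real_inner_smul_right, inner_sub_right]; ring
      rw [hcomp] at hs'4
      have hs'pos : 0 < s' := lt_of_le_of_lt hs0ge hs'1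
      have h1s' : 0 ≤ 1 - s' := by linarith
      nlinarith
    have hyF : r s0 ∈ F i := by
      rw [hFeq i]; exact ⟨hs0A.2, hyi⟩
    have h1s0 : (0:ℝ) < 1 - s0 := by linarith
    have hq_seg : (1 - θ) • p + θ • x ∈ convexHull ℝ (F i ∪ {p}) := by
      set t : ℝ := (a - s0)/(1 - s0) with htdef
      have ht0 : 0 < t := div_pos (by linarith) h1s0
      have ht1 : t ≤ 1 := by rw [div_le_one h1s0]; linarith
      have hθa : θ = 1 - a := by rw [hadef]; ring
      have h1s0' : (1:ℝ) - s0 ≠ 0 := ne_of_gt h1s0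
      have hexp : (1 - t) • (x + s0 • (p - x)) + t • p
          = ((1 - t) * s0 + t) • p + ((1 - t) * (1 - s0)) • x := by module
      have e2 : (1 - t) * s0 + t = a := by rw [htdef]; field_simp; try ring
      have e1 : (1 - t) * (1 - s0) = 1 - a := by rw [htdef]; field_simp; try ring
      have hqeq : (1 - θ) • p + θ • x = (1 - t) • (r s0) + t • p := by
        show (1 - θ) • p + θ • x = (1 - t) • (x + s0 • (p - x)) + t • p
        rw [hexp, e1, e2, hθa]
        module
      rw [hqeq]
      refine (convex_convexHull ℝ (F i ∪ {p})).segment_subset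
        (subset_convexHull ℝ (F i ∪ {p}) (Set.mem_union_left _ hyF))
        (subset_convexHull ℝ (F i ∪ {p}) (Set.mem_union_right _ rfl)) ?_
      exact ⟨1 - t, t, by linarith, le_of_lt ht0, by ring, rfl⟩
    simp only [Set.mem_iUnion, Set.mem_setOf_eq]
    exact ⟨i, hvis, hq_seg⟩
end

section
/- Let v₁, …, v_m ∈ ℝ^d be nonzero vectors and let H be the central hyperplane arrangement consisting of the hyperplanes v_i^⊥. Let m' be the number of equivalence classes of the v_i under v ∼ ±v. Then the number of connected components (chambers) of ℝ^d \ ⋃ H is at most Σ_{j=0}^{d} binom(m', j). -/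
open scoped RealInnerProductSpace
open Module

private theorem binom_sum_rec (n d : ℕ) :
    ∑ j ∈ Finset.range (d + 2), (n+1).choose j
      = (∑ j ∈ Finset.range (d + 2), n.choose j) + ∑ j ∈ Finset.range (d + 1), n.choose j := by
  rw [Finset.sum_range_succ' (fun j => (n+1).choose j),
      Finset.sum_range_succ' (fun j => n.choose j)]
  simp [Nat.choose_succ_succ, Finset.sum_add_distrib]
  ring

theorem signCount (d : ℕ) :
    ∀ (E : Type) [NormedAddCommGroup E] [InnerProductSpace ℝ E] [FiniteDimensional ℝ E],
      finrank ℝ E ≤ d → ∀ (n : ℕ) (v : Fin n → E),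
      Set.ncard {τ : Fin n → Bool | ∃ x : E,
          (∀ i, ⟪v i, x⟫ ≠ 0) ∧ ∀ i, τ i = decide (0 < ⟪v i, x⟫)}
        ≤ ∑ j ∈ Finset.range (d + 1), n.choose j := by
  induction d with
  | zero =>
      intro E _ _ _ hE n v
      have hsub : Subsingleton E := finrank_zero_iff.mp (Nat.le_zero.mp hE)
      match n with
      | 0 =>
          have : {τ : Fin 0 → Bool | ∃ x : E,
              (∀ i, ⟪v i, x⟫ ≠ 0) ∧ ∀ i, τ i = decide (0 < ⟪v i, x⟫)}.ncard ≤ 1 := by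
            rw [Set.ncard_le_one]
            intro a _ b _
            funext i; exact i.elim0
          simpa using this
      | n + 1 =>
          have he : {τ : Fin (n+1) → Bool | ∃ x : E,
              (∀ i, ⟪v i, x⟫ ≠ 0) ∧ ∀ i, τ i = decide (0 < ⟪v i, x⟫)} = ∅ := by
            ext τ
            simp only [Set.mem_setOf_eq, Set.mem_empty_iff_false, iff_false]
            rintro ⟨x, hx, -⟩
            have : x = 0 := Subsingleton.elim x 0
            exact hx 0 (by simp [this])
          simp [he]
  | succ d ih =>
      intro E _ _ _ hE n v
      induction n with
      | zero =>
          have : {τ : Fin 0 → Bool | ∃ x : E,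
              (∀ i, ⟪v i, x⟫ ≠ 0) ∧ ∀ i, τ i = decide (0 < ⟪v i, x⟫)}.ncard ≤ 1 := by
            rw [Set.ncard_le_one]
            intro a _ b _
            funext i; exact i.elim0
          refine this.trans ?_
          rw [Finset.sum_range_succ']
          simp
      | succ n ihn =>
          by_cases hvl : v (Fin.last n) = 0
          · have he : {τ : Fin (n+1) → Bool | ∃ x : E,
                (∀ i, ⟪v i, x⟫ ≠ 0) ∧ ∀ i, τ i = decide (0 < ⟪v i, x⟫)} = ∅ := by
              ext τ
              simp only [Set.mem_setOf_eq, Set.mem_empty_iff_false, iff_false]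
              rintro ⟨x, hx, -⟩
              exact hx (Fin.last n) (by simp [hvl])
            simp [he]
          · set K : Submodule ℝ E := (ℝ ∙ (v (Fin.last n)))ᗮ with hK
            have hKrank : finrank ℝ K ≤ d := by
              have h1 := Submodule.finrank_add_finrank_orthogonal
                (K := (ℝ ∙ (v (Fin.last n)) : Submodule ℝ E))
              rw [finrank_span_singleton hvl] at h1
              rw [← hK] at h1
              omega
            set u : Fin n → K := fun i => Submodule.orthogonalProjectionOnto K (v i.castSucc) with hu
            have hinner : ∀ (w : E) (z : K),
                ⟪(Submodule.orthogonalProjectionOnto K w : K), z⟫ = ⟪w, (z : E)⟫ := by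
              intro w z
              have h2 : ⟪(z : E), w - (Submodule.orthogonalProjectionOnto K w : E)⟫ = 0 :=
                (Submodule.sub_starProjection_mem_orthogonal (K := K) w) _ z.2
              rw [inner_sub_right] at h2
              rw [Submodule.coe_inner]
              have c1 : ⟪(z : E), (Submodule.orthogonalProjectionOnto K w : E)⟫
                  = ⟪(Submodule.orthogonalProjectionOnto K w : E), (z : E)⟫ := real_inner_comm _ _
              have c2 : ⟪(z : E), w⟫ = ⟪w, (z : E)⟫ := real_inner_comm _ _
              linarith
            set A := {τ : Fin (n+1) → Bool | ∃ x : E,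
                (∀ i, ⟪v i, x⟫ ≠ 0) ∧ ∀ i, τ i = decide (0 < ⟪v i, x⟫)} with hA
            set A' := {τ : Fin n → Bool | ∃ x : E,
                (∀ i, ⟪v (Fin.castSucc i), x⟫ ≠ 0) ∧ ∀ i, τ i = decide (0 < ⟪v (Fin.castSucc i), x⟫)}
              with hA'
            set AH := {τ : Fin n → Bool | ∃ z : K,
                (∀ i : Fin n, ⟪u i, z⟫ ≠ 0) ∧ ∀ i : Fin n, τ i = decide (0 < ⟪u i, z⟫)} with hAH
            set r : (Fin (n+1) → Bool) → (Fin n → Bool) := fun τ => τ ∘ Fin.castSucc with hr'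
            set At := {τ | τ ∈ A ∧ τ (Fin.last n) = true} with hAt
            set Af := {τ | τ ∈ A ∧ τ (Fin.last n) = false} with hAf
            have hcup : A = At ∪ Af := by
              ext τ
              simp only [hAt, hAf, Set.mem_union, Set.mem_setOf_eq]
              cases h : τ (Fin.last n) <;> tauto
            have hinj : ∀ B : Set (Fin (n+1) → Bool), (∀ τ ∈ B, τ ∈ A) →
                (∀ τ₁ ∈ B, ∀ τ₂ ∈ B, τ₁ (Fin.last n) = τ₂ (Fin.last n)) →
                Set.InjOn r B := by
              intro B _ hlast τ₁ h₁ τ₂ h₂ heq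
              funext i
              refine Fin.lastCases ?_ ?_ i
              · exact hlast τ₁ h₁ τ₂ h₂
              · intro j
                exact congrFun heq j
            have hsubt : r '' At ⊆ A' := by
              rintro τ' ⟨τ, ⟨⟨x, hx, hτ⟩, -⟩, rfl⟩
              exact ⟨x, fun i => hx _, fun i => hτ _⟩
            have hsubf : r '' Af ⊆ A' := by
              rintro τ' ⟨τ, ⟨⟨x, hx, hτ⟩, -⟩, rfl⟩
              exact ⟨x, fun i => hx _, fun i => hτ _⟩
            have hseg : r '' At ∩ r '' Af ⊆ AH := by
              rintro τ' ⟨⟨τp, ⟨⟨xp, hxp, hτp⟩, hlp⟩, hrp⟩, ⟨τm, ⟨⟨xm, hxm, hτm⟩, hlm⟩, hrm⟩⟩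
              have ha : 0 < ⟪v (Fin.last n), xp⟫ := by
                have := (hτp (Fin.last n)).symm.trans hlp
                exact of_decide_eq_true this
              have hb : ⟪v (Fin.last n), xm⟫ < 0 := by
                have h1 := (hτm (Fin.last n)).symm.trans hlm
                have h2 : ¬ (0 < ⟪v (Fin.last n), xm⟫) := of_decide_eq_false h1
                exact lt_of_le_of_ne (not_lt.mp h2) (hxm (Fin.last n))
              set a := ⟪v (Fin.last n), xp⟫ with ha'
              set b := ⟪v (Fin.last n), xm⟫ with hb'
              have hab : 0 < a - b := by linarith
              have hab' : a - b ≠ 0 := ne_of_gt hab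
              set s := a / (a - b) with hs
              have hs0 : 0 < s := div_pos ha hab
              have hs1 : s < 1 := by rw [hs, div_lt_one hab]; linarith
              set y := xp + s • (xm - xp) with hy
              have hyval : ∀ w : E, ⟪w, y⟫ = ⟪w, xp⟫ + s * (⟪w, xm⟫ - ⟪w, xp⟫) := by
                intro w
                rw [hy, inner_add_right, real_inner_smul_right, inner_sub_right]
              have hyK : y ∈ K := by
                rw [hK, Submodule.mem_orthogonal_singleton_iff_inner_right, hyval]
                rw [← ha', ← hb', hs]
                field_simp
                ring
              have hsigns : ∀ i : Fin n, (τ' i = true → 0 < ⟪v (Fin.castSucc i), y⟫) ∧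
                  (τ' i = false → ⟪v (Fin.castSucc i), y⟫ < 0) := by
                intro i
                have hp := hτp (Fin.castSucc i)
                have hm := hτm (Fin.castSucc i)
                have hrp2 : τ' i = τp (Fin.castSucc i) := (congrFun hrp i).symm
                have hrm2 : τ' i = τm (Fin.castSucc i) := (congrFun hrm i).symm
                rw [hyval]
                constructor
                · intro ht
                  have h1 : 0 < ⟪v (Fin.castSucc i), xp⟫ :=
                    of_decide_eq_true (hp.symm.trans (hrp2 ▸ ht))
                  have h2 : 0 < ⟪v (Fin.castSucc i), xm⟫ :=
                    of_decide_eq_true (hm.symm.trans (hrm2 ▸ ht))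
                  nlinarith
                · intro ht
                  have h1 : ⟪v (Fin.castSucc i), xp⟫ < 0 := by
                    have := of_decide_eq_false (hp.symm.trans (hrp2 ▸ ht))
                    exact lt_of_le_of_ne (not_lt.mp this) (hxp (Fin.castSucc i))
                  have h2 : ⟪v (Fin.castSucc i), xm⟫ < 0 := by
                    have := of_decide_eq_false (hm.symm.trans (hrm2 ▸ ht))
                    exact lt_of_le_of_ne (not_lt.mp this) (hxm (Fin.castSucc i))
                  nlinarith
              refine ⟨⟨y, hyK⟩, fun i => ?_, fun i => ?_⟩
              · have hh : ⟪u i, (⟨y, hyK⟩ : K)⟫ = ⟪v (Fin.castSucc i), y⟫ :=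
                  hinner (v (Fin.castSucc i)) ⟨y, hyK⟩
                rw [hh]
                cases h : τ' i with
                | true => exact ne_of_gt ((hsigns i).1 h)
                | false => exact ne_of_lt ((hsigns i).2 h)
              · have hh : ⟪u i, (⟨y, hyK⟩ : K)⟫ = ⟪v (Fin.castSucc i), y⟫ :=
                  hinner (v (Fin.castSucc i)) ⟨y, hyK⟩
                rw [hh]
                cases h : τ' i with
                | true => exact (decide_eq_true ((hsigns i).1 h)).symm
                | false =>
                    exact (decide_eq_false (not_lt.mpr (le_of_lt ((hsigns i).2 h)))).symm
            have e1 : A.ncard ≤ At.ncard + Af.ncard := by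
              rw [hcup]; exact Set.ncard_union_le _ _
            have e2 : At.ncard = (r '' At).ncard :=
              (Set.ncard_image_of_injOn (hinj At (fun τ h => h.1)
                (fun τ₁ h₁ τ₂ h₂ => h₁.2.trans h₂.2.symm))).symm
            have e3 : Af.ncard = (r '' Af).ncard :=
              (Set.ncard_image_of_injOn (hinj Af (fun τ h => h.1)
                (fun τ₁ h₁ τ₂ h₂ => h₁.2.trans h₂.2.symm))).symm
            have e4 : (r '' At).ncard + (r '' Af).ncard
                = (r '' At ∪ r '' Af).ncard + (r '' At ∩ r '' Af).ncard :=
              (Set.ncard_union_add_ncard_inter _ _).symm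
            have e5 : (r '' At ∪ r '' Af).ncard ≤ A'.ncard :=
              Set.ncard_le_ncard (Set.union_subset hsubt hsubf) (Set.toFinite _)
            have e6 : (r '' At ∩ r '' Af).ncard ≤ AH.ncard :=
              Set.ncard_le_ncard hseg (Set.toFinite _)
            have e7 : A'.ncard ≤ ∑ j ∈ Finset.range (d + 2), n.choose j :=
              ihn (fun i => v i.castSucc)
            have e8 : AH.ncard ≤ ∑ j ∈ Finset.range (d + 1), n.choose j :=
              ih K hKrank n u
            rw [binom_sum_rec]
            omega

/-- The number of chambers of a central hyperplane arrangement given by the hyperplanes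
`v_i^⊥` is at most `Σ_{j=0}^{d} binom(m', j)`, where `m'` is the number of equivalence
classes of the normal vectors `v_i` under `v ∼ ±v`. -/
theorem chambers_bound {d m : ℕ} (v : Fin m → EuclideanSpace ℝ (Fin d))
    (hv : ∀ i, v i ≠ 0)
    (S : Set (EuclideanSpace ℝ (Fin d)))
    (hS : S = {x | ∀ i, ⟪v i, x⟫ ≠ 0})
    (m' : ℕ)
    (hm' : m' = Set.ncard (Set.range fun i => ({v i, -v i} : Set (EuclideanSpace ℝ (Fin d))))) :
    Set.ncard {C : Set (EuclideanSpace ℝ (Fin d)) | ∃ x ∈ S, C = connectedComponentIn S x} ≤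
      ∑ j ∈ Finset.range (d + 1), m'.choose j := by
  classical
  -- the sign map and cells
  set sgn : EuclideanSpace ℝ (Fin d) → (Fin m → Bool) := fun x i => decide (0 < ⟪v i, x⟫) with hsgn
  set g : (Fin m → Bool) → Set (EuclideanSpace ℝ (Fin d)) :=
    fun τ => ⋂ i, {y : EuclideanSpace ℝ (Fin d) | if τ i = true then 0 < ⟪v i, y⟫ else ⟪v i, y⟫ < 0} with hg
  set Sv : Set (Fin m → Bool) := {τ | ∃ x : EuclideanSpace ℝ (Fin d),
      (∀ i, ⟪v i, x⟫ ≠ 0) ∧ ∀ i, τ i = decide (0 < ⟪v i, x⟫)} with hSv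
  -- basic facts about cells
  have hgS : ∀ τ, g τ ⊆ S := by
    intro τ z hz
    rw [hS]
    intro i
    have hzi := Set.mem_iInter.mp hz i
    by_cases h : τ i = true
    · rw [Set.mem_setOf_eq, if_pos h] at hzi; exact ne_of_gt hzi
    · rw [Set.mem_setOf_eq, if_neg h] at hzi; exact ne_of_lt hzi
  have hmemg : ∀ x ∈ S, x ∈ g (sgn x) := by
    intro x hx
    rw [hS] at hx
    refine Set.mem_iInter.mpr fun i => ?_
    by_cases h : 0 < ⟪v i, x⟫
    · have : sgn x i = true := decide_eq_true h
      rw [Set.mem_setOf_eq, if_pos this]; exact h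
    · have : ¬ (sgn x i = true) := by
        simp only [hsgn, decide_eq_true_eq]; exact h
      rw [Set.mem_setOf_eq, if_neg this]
      exact lt_of_le_of_ne (not_lt.mp h) (hx i)
  have hgconv : ∀ τ, Convex ℝ (g τ) := by
    intro τ
    refine convex_iInter fun i => ?_
    have hlin : IsLinearMap ℝ (fun z : EuclideanSpace ℝ (Fin d) => ⟪v i, z⟫) :=
      ⟨fun a b => inner_add_right (v i) a b,
       fun c a => by rw [real_inner_smul_right (v i) a c]; rfl⟩
    by_cases h : τ i = true
    · simp only [if_pos h]; exact convex_halfSpace_gt hlin 0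
    · simp only [if_neg h]; exact convex_halfSpace_lt hlin 0
  -- the component of x is exactly the cell of x
  have key : ∀ x ∈ S, connectedComponentIn S x = g (sgn x) := by
    intro x hxS
    apply Set.Subset.antisymm
    · intro y hy
      have hPS : connectedComponentIn S x ⊆ S := connectedComponentIn_subset _ _
      have hyS : y ∈ S := hPS hy
      have hxP : x ∈ connectedComponentIn S x := mem_connectedComponentIn hxS
      refine Set.mem_iInter.mpr fun i => ?_
      have hf : Continuous fun z : EuclideanSpace ℝ (Fin d) => ⟪v i, z⟫ := continuous_const.inner continuous_id
      have hfx : ⟪v i, x⟫ ≠ 0 := by rw [hS] at hxS; exact hxS i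
      have hfy : ⟪v i, y⟫ ≠ 0 := by rw [hS] at hyS; exact hyS i
      have hsame : 0 < ⟪v i, x⟫ ↔ 0 < ⟪v i, y⟫ := by
        constructor
        · intro hpx
          by_contra hny
          have hny' : ⟪v i, y⟫ < 0 := lt_of_le_of_ne (not_lt.mp hny) hfy
          have h0 : (0:ℝ) ∈ Set.Icc (⟪v i, y⟫) (⟪v i, x⟫) := ⟨le_of_lt hny', le_of_lt hpx⟩
          obtain ⟨z, hz, hz0⟩ := isPreconnected_connectedComponentIn.intermediate_value
            hy hxP hf.continuousOn h0
          have : ⟪v i, z⟫ ≠ 0 := by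
            have := hPS hz; rw [hS] at this; exact this i
          exact this hz0
        · intro hpy
          by_contra hnx
          have hnx' : ⟪v i, x⟫ < 0 := lt_of_le_of_ne (not_lt.mp hnx) hfx
          have h0 : (0:ℝ) ∈ Set.Icc (⟪v i, x⟫) (⟪v i, y⟫) := ⟨le_of_lt hnx', le_of_lt hpy⟩
          obtain ⟨z, hz, hz0⟩ := isPreconnected_connectedComponentIn.intermediate_value
            hxP hy hf.continuousOn h0
          have : ⟪v i, z⟫ ≠ 0 := by
            have := hPS hz; rw [hS] at this; exact this i
          exact this hz0
      by_cases h : 0 < ⟪v i, x⟫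
      · have ht : sgn x i = true := decide_eq_true h
        rw [Set.mem_setOf_eq, if_pos ht]
        exact hsame.mp h
      · have ht : ¬ (sgn x i = true) := by
          simp only [hsgn, decide_eq_true_eq]; exact h
        rw [Set.mem_setOf_eq, if_neg ht]
        have : ¬ (0 < ⟪v i, y⟫) := fun hc => h (hsame.mpr hc)
        exact lt_of_le_of_ne (not_lt.mp this) hfy
    · exact (hgconv (sgn x)).isPreconnected.subset_connectedComponentIn
        (hmemg x hxS) (hgS (sgn x))
  -- chambers are images of realized sign vectors
  have hcc : {C : Set (EuclideanSpace ℝ (Fin d)) | ∃ x ∈ S, C = connectedComponentIn S x} ⊆ g '' Sv := by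
    rintro C ⟨x, hxS, rfl⟩
    refine ⟨sgn x, ⟨x, ?_, fun i => rfl⟩, (key x hxS).symm⟩
    rw [hS] at hxS; exact hxS
  have step1 : Set.ncard {C : Set (EuclideanSpace ℝ (Fin d)) | ∃ x ∈ S, C = connectedComponentIn S x}
      ≤ Set.ncard Sv := by
    refine le_trans (Set.ncard_le_ncard hcc ((Set.toFinite Sv).image g)) ?_
    exact Set.ncard_image_le (Set.toFinite _)
  -- choose representatives for the lines
  set T := Set.range (fun i => ({v i, -v i} : Set (EuclideanSpace ℝ (Fin d)))) with hT
  have hTfin : T.Finite := Set.finite_range _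
  have hfc : hTfin.toFinset.card = m' := by
    rw [hm', Set.ncard_eq_toFinset_card T hTfin]
  set e := hTfin.toFinset.equivFin with he
  have ht' : ∀ j : Fin m', ∃ i : Fin m,
      ({v i, -v i} : Set (EuclideanSpace ℝ (Fin d))) = (e.symm (Fin.cast hfc.symm j)).1 := by
    intro j
    have := (e.symm (Fin.cast hfc.symm j)).2
    rw [Set.Finite.mem_toFinset] at this
    exact this
  set k : Fin m' → Fin m := fun j => Classical.choose (ht' j) with hk
  have hkspec : ∀ j, ({v (k j), -v (k j)} : Set (EuclideanSpace ℝ (Fin d))) = (e.symm (Fin.cast hfc.symm j)).1 :=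
    fun j => Classical.choose_spec (ht' j)
  set w : Fin m' → EuclideanSpace ℝ (Fin d) := fun j => v (k j) with hw
  -- index map back
  set jdx : Fin m → Fin m' := fun i =>
    Fin.cast hfc (e ⟨({v i, -v i} : Set (EuclideanSpace ℝ (Fin d))), by
      rw [Set.Finite.mem_toFinset]; exact ⟨i, rfl⟩⟩) with hjdx
  have hpair : ∀ i : Fin m, ({v (k (jdx i)), -v (k (jdx i))} : Set (EuclideanSpace ℝ (Fin d))) = {v i, -v i} := by
    intro i
    rw [hkspec (jdx i)]
    have : e.symm (Fin.cast hfc.symm (jdx i))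
        = ⟨({v i, -v i} : Set (EuclideanSpace ℝ (Fin d))), by rw [Set.Finite.mem_toFinset]; exact ⟨i, rfl⟩⟩ := by
      rw [hjdx]
      simp
    rw [this]
  have hcase : ∀ i : Fin m, v (k (jdx i)) = v i ∨ v (k (jdx i)) = -v i := by
    intro i
    have hmem : v (k (jdx i)) ∈ ({v i, -v i} : Set (EuclideanSpace ℝ (Fin d))) := by
      rw [← hpair i]; exact Set.mem_insert _ _
    simpa using hmem
  -- the injection on sign vectors
  set φ : (Fin m → Bool) → (Fin m' → Bool) := fun τ j => τ (k j) with hφ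
  set Sw : Set (Fin m' → Bool) := {σ | ∃ x : EuclideanSpace ℝ (Fin d),
      (∀ j, ⟪w j, x⟫ ≠ 0) ∧ ∀ j, σ j = decide (0 < ⟪w j, x⟫)} with hSw
  have hmaps : φ '' Sv ⊆ Sw := by
    rintro σ ⟨τ, ⟨x, hx, hτ⟩, rfl⟩
    exact ⟨x, fun j => hx (k j), fun j => hτ (k j)⟩
  have hneg : ∀ (c : ℝ), c ≠ 0 → decide (0 < -c) = ! decide (0 < c) := by
    intro c hc
    by_cases h : 0 < c
    · have h1 : ¬ 0 < -c := by linarith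
      simp [h, h1]
    · have h' : c < 0 := lt_of_le_of_ne (not_lt.mp h) hc
      have h1 : 0 < -c := by linarith
      simp [h, h1]
  have hinj : Set.InjOn φ Sv := by
    rintro τ₁ ⟨x₁, hx₁, hτ₁⟩ τ₂ ⟨x₂, hx₂, hτ₂⟩ hφeq
    funext i
    have h12 := congrFun hφeq (jdx i)
    simp only [hφ] at h12
    rcases hcase i with h | h
    · rw [hτ₁ i, hτ₂ i, ← h]
      rw [hτ₁ (k (jdx i)), hτ₂ (k (jdx i))] at h12
      exact h12
    · have e₁ : ⟪v i, x₁⟫ = -⟪v (k (jdx i)), x₁⟫ := by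
        rw [h]; rw [inner_neg_left]; ring
      have e₂ : ⟪v i, x₂⟫ = -⟪v (k (jdx i)), x₂⟫ := by
        rw [h]; rw [inner_neg_left]; ring
      rw [hτ₁ i, hτ₂ i, e₁, e₂, hneg _ (fun hc => hx₁ (k (jdx i)) hc),
        hneg _ (fun hc => hx₂ (k (jdx i)) hc)]
      rw [hτ₁ (k (jdx i)), hτ₂ (k (jdx i))] at h12
      rw [h12]
  have step2 : Set.ncard Sv ≤ Set.ncard Sw := by
    rw [← Set.ncard_image_of_injOn hinj]
    exact Set.ncard_le_ncard hmaps (Set.toFinite _)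
  have step3 : Set.ncard Sw ≤ ∑ j ∈ Finset.range (d + 1), m'.choose j := by
    have hrank : Module.finrank ℝ (EuclideanSpace ℝ (Fin d)) ≤ d :=
      le_of_eq finrank_euclideanSpace_fin
    exact signCount d (EuclideanSpace ℝ (Fin d)) hrank m' w
  exact le_trans step1 (le_trans step2 step3)
end
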